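/- Let u > 1 and M > 0 be real and suppose π(e^u) - li(e^u) > M. Then for every integer n with 0 ≤ n ≤ ⌊M·u⌋, π(⌊e^u⌋ + n) > li(⌊e^u⌋ + n); i.e., π(x) - li(x) stays positive for at least ⌊M·u⌋ consecutive integers x starting at ⌊e^u⌋. -/

import Mathlib

/-
Over `[N, N + r]` the integrand `1 / log t` of `li` is at most `1 / log N`, so `li` grows by at most
`r / log N` there, while `π` does not decrease. Starting from `N = e^u`, where `π - li > M`, the
difference `π - li` therefore stays above `M - n / u ≥ 0` at `⌊e^u⌋ + n` for all `n ≤ M u`.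
-/

/-- The prime counting function on the reals. -/
noncomputable def primePi (x : ℝ) : ℝ := Nat.primeCounting ⌊x⌋₊

/-- The logarithmic integral li(x), normalized so that li(2) ≈ 1.04516378011749278. -/
noncomputable def li (x : ℝ) : ℝ :=
  1.04516378011749278 + ∫ t in (2:ℝ)..x, 1 / Real.log t

open Real

lemma intervalIntegrable_one_div_log {a b : ℝ} (ha : 1 < a) (hb : 1 < b) :
    IntervalIntegrable (fun t : ℝ => 1 / log t) MeasureTheory.volume a b := by
  refine ContinuousOn.intervalIntegrable fun t ht => ?_
  have ht : 1 < t := (lt_min ha hb).trans_le ht.1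
  exact (continuousAt_const.div (continuousAt_log (by positivity))
    (log_pos ht).ne').continuousWithinAt

lemma li_sub_li {a b : ℝ} (ha : 1 < a) (hb : 1 < b) :
    li b - li a = ∫ t in a..b, 1 / log t := by
  have h := intervalIntegral.integral_add_adjacent_intervals
    (intervalIntegrable_one_div_log one_lt_two ha) (intervalIntegrable_one_div_log ha hb)
  unfold li
  linarith

lemma li_le_li {a b : ℝ} (ha : 1 < a) (hab : a ≤ b) : li a ≤ li b := by
  have hint : 0 ≤ ∫ t in a..b, 1 / log t :=
    intervalIntegral.integral_nonneg hab fun t ht => by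
      have := log_pos (ha.trans_le ht.1)
      positivity
  linarith [li_sub_li ha (ha.trans_le hab)]

lemma li_add_le {a r : ℝ} (ha : 1 < a) (hr : 0 ≤ r) : li (a + r) ≤ li a + r / log a := by
  have hlog : 0 < log a := log_pos ha
  have hint : (∫ t in a..a + r, 1 / log t) ≤ ∫ _ in a..a + r, 1 / log a :=
    intervalIntegral.integral_mono_on (by linarith)
      (intervalIntegrable_one_div_log ha (by linarith)) intervalIntegrable_const
      fun t ht => one_div_le_one_div_of_le hlog (log_le_log (by linarith) ht.1)
  rw [intervalIntegral.integral_const, smul_eq_mul, add_sub_cancel_left, ← div_eq_mul_one_div]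
    at hint
  linarith [li_sub_li ha (show 1 < a + r by linarith)]

lemma floor_natCast_add_natCast (x : ℝ) (n : ℕ) : ⌊(⌊x⌋₊ : ℝ) + n⌋₊ = ⌊x⌋₊ + n := by
  exact_mod_cast Nat.floor_natCast (⌊x⌋₊ + n)

lemma primePi_le_primePi_floor_add (x : ℝ) (n : ℕ) : primePi x ≤ primePi (⌊x⌋₊ + n) := by
  unfold primePi
  rw [floor_natCast_add_natCast]
  exact_mod_cast Nat.monotone_primeCounting (Nat.le_add_right _ _)

lemma li_floor_add_le {x : ℝ} (hx : 2 ≤ x) (n : ℕ) : li (⌊x⌋₊ + n) ≤ li x + n / log x := by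
  have hfloor : (2 : ℝ) ≤ ⌊x⌋₊ := by exact_mod_cast Nat.le_floor (by exact_mod_cast hx)
  calc li (⌊x⌋₊ + n) ≤ li (x + n) :=
        li_le_li (by linarith) (by linarith [Nat.floor_le (zero_le_two.trans hx)])
    _ ≤ li x + n / log x := li_add_le (by linarith) n.cast_nonneg

lemma primePi_sub_li_floor_add_ge {x : ℝ} (hx : 2 ≤ x) (n : ℕ) :
    primePi x - li x - n / log x ≤ primePi (⌊x⌋₊ + n) - li (⌊x⌋₊ + n) := by
  linarith [primePi_le_primePi_floor_add x n, li_floor_add_le hx n]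

theorem pi_gt_li_consecutive (u M : ℝ) (hu : u > 1) (hM : M > 0)
    (h : primePi (Real.exp u) - li (Real.exp u) > M) :
    ∀ n : ℕ, n ≤ ⌊M * u⌋₊ →
      primePi ((⌊Real.exp u⌋₊ : ℝ) + n) > li ((⌊Real.exp u⌋₊ : ℝ) + n) := by
  intro n hn
  have hexp : 2 ≤ exp u := by linarith [add_one_le_exp u]
  have hnM : (n : ℝ) / u ≤ M := by
    rw [div_le_iff₀ (by linarith)]
    calc (n : ℝ) ≤ ⌊M * u⌋₊ := by exact_mod_cast hn
      _ ≤ M * u := Nat.floor_le (by positivity)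
  have := primePi_sub_li_floor_add_ge hexp n
  rw [log_exp] at this
  linarith
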